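/- arXiv:2503.12364 — 3 statements merged into one kernel-verified Lean document; each statement's English description precedes it below -/
import Mathlib

section
/- Let (x,y,a,b) with ax+by ≠ 1, and suppose infinitesimal displacements (dx,dy) and (da,db) satisfy the dancing conditions: (dx,dy) is proportional to (x − db/(a db − b da), y − da/(b da − a db)) and (da,db) is proportional to (a − dy/(x dy − y dx), b − dx/(y dx − x dy)). Then da·((1−by)dx + bx dy) + db·(ay dx + (1−ax)dy) = 0; i.e. dancing pairs are null directions of the quadratic form g₀ = da((1−by)dx + bx dy) + db(ay dx + (1−ax)dy). Moreover, each of the two dancing conditions implies the other. -/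
/-!
Write `Δ = a db - b da` and `δ = x dy - y dx`. Clearing the denominator `Δ`, the first dancing
condition reads `Δ (dx, dy) = l (x Δ - db, y Δ + da)`, and from this both `da dx + db dy` and `Δ δ`
equal `l (x da + y db)`. Since `g₀ = da dx + db dy - Δ δ`, dancing pairs are null.
Conversely, nullity says exactly that `(da, db)` is parallel to `(a δ - dy, b δ + dx)`, the
direction in the second dancing condition; pairing that vector with `(x, y)` gives
`(a x + b y - 1) δ ≠ 0`, so it does not vanish and the proportionality constant can be read off.
Both the dancing condition and `g₀` are symmetric under `(x, y, dx, dy) ↔ (a, b, da, db)`,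
which yields the converse implication.
-/

/-- With `(x, y, dx, dy)` and `(a, b, da, db)` swapped this is the second dancing condition. -/
def DancingCondition (x y a b dx dy da db : ℝ) : Prop :=
  ∃ l : ℝ, l ≠ 0 ∧ (dx, dy) = (l * (x - db/(a*db - b*da)), l * (y - da/(b*da - a*db)))

theorem eq_div_mul_of_mul_eq_mul {K : Type*} [Field K] {u₁ u₂ v₁ v₂ p₁ p₂ : K}
    (huv : u₁ * v₂ = u₂ * v₁) (hpv : p₁ * v₁ + p₂ * v₂ ≠ 0) :
    u₁ = (p₁ * u₁ + p₂ * u₂) / (p₁ * v₁ + p₂ * v₂) * v₁ ∧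
      u₂ = (p₁ * u₁ + p₂ * u₂) / (p₁ * v₁ + p₂ * v₂) * v₂ := by
  constructor <;> rw [div_mul_eq_mul_div, eq_div_iff hpv]
  · linear_combination p₂ * huv
  · linear_combination (-p₁) * huv

namespace DancingCondition

variable {x y a b dx dy da db : ℝ}

theorem null (h₂ : a*db - b*da ≠ 0) (h : DancingCondition x y a b dx dy da db) :
    da*dx + db*dy = (a*db - b*da) * (x*dy - y*dx) := by
  obtain ⟨l, -, hl⟩ := h
  obtain ⟨rfl, rfl⟩ := Prod.mk.injEq _ _ _ _ ▸ hl
  rw [← neg_sub (a*db), div_neg]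
  generalize a*db - b*da = Δ at *
  field_simp
  ring

theorem of_null (h₁ : x*dy - y*dx ≠ 0) (h₂ : a*db - b*da ≠ 0) (h₃ : a*x + b*y ≠ 1)
    (h : da*dx + db*dy = (a*db - b*da) * (x*dy - y*dx)) :
    DancingCondition a b x y da db dx dy := by
  unfold DancingCondition
  rw [← neg_sub (x*dy), div_neg, sub_neg_eq_add]
  generalize hδ : x*dy - y*dx = δ at h₁ h ⊢
  have hparallel : da * (b + dx/δ) = db * (a - dy/δ) := by
    field_simp
    linear_combination h
  have hpairing : x * (a - dy/δ) + y * (b + dx/δ) = a*x + b*y - 1 := by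
    field_simp
    linear_combination (-1 : ℝ) * hδ
  have hpairing_ne : x * (a - dy/δ) + y * (b + dx/δ) ≠ 0 := by
    rw [hpairing]
    exact sub_ne_zero.mpr h₃
  obtain ⟨hda, hdb⟩ := eq_div_mul_of_mul_eq_mul hparallel hpairing_ne
  refine ⟨_, fun hm => h₂ ?_, Prod.ext hda hdb⟩
  rw [hm, zero_mul] at hda hdb
  rw [hda, hdb]
  ring

end DancingCondition

theorem dancing_pairs_are_null (x y a b dx dy da db : ℝ)
    (h₁ : x*dy - y*dx ≠ 0) (h₂ : a*db - b*da ≠ 0) (h₃ : a*x + b*y ≠ 1) :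
    let C₁ : Prop := ∃ l : ℝ, l ≠ 0 ∧
      (dx, dy) = (l * (x - db/(a*db - b*da)), l * (y - da/(b*da - a*db)))
    let C₂ : Prop := ∃ m : ℝ, m ≠ 0 ∧
      (da, db) = (m * (a - dy/(x*dy - y*dx)), m * (b - dx/(y*dx - x*dy)))
    (C₁ ↔ C₂)
    ∧ (C₁ → da*((1 - b*y)*dx + b*x*dy) + db*(a*y*dx + (1 - a*x)*dy) = 0) := by
  intro C₁ C₂
  have h₃' : x*a + y*b ≠ 1 := by rwa [mul_comm x, mul_comm y]
  have C₁_imp_C₂ (hC₁ : DancingCondition x y a b dx dy da db) : C₂ :=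
    DancingCondition.of_null h₁ h₂ h₃ (hC₁.null h₂)
  have C₂_imp_C₁ (hC₂ : DancingCondition a b x y da db dx dy) : C₁ :=
    DancingCondition.of_null h₂ h₁ h₃' (by linear_combination hC₂.null h₁)
  refine ⟨⟨C₁_imp_C₂, C₂_imp_C₁⟩, fun hC₁ => ?_⟩
  linear_combination DancingCondition.null h₂ hC₁
end

section
/- The function V(x,y,a,b) = −log(ax+by−1), defined where ax+by > 1, is a para-Kähler potential for the dancing metric: its mixed second partial derivatives satisfy 2(V_{ax} dx + V_{ay} dy)da + 2(V_{bx} dx + V_{by} dy)db = [2da((1−by)dx + bx dy) + 2db(ay dx + (1−ax)dy)]/(1−ax−by)². Concretely, ∂²V/∂a∂x = (1−by)/(1−ax−by)², ∂²V/∂a∂y = bx/(1−ax−by)², ∂²V/∂b∂x = ay/(1−ax−by)², ∂²V/∂b∂y = (1−ax)/(1−ax−by)². -/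
/-!
The first partials `V_x = -a / (ax+by-1)` and `V_y = -b / (ax+by-1)` hold as identities of
functions of all four variables, so each mixed partial is the derivative of a quotient of two affine
functions of `a` (or `b`), computed by the quotient rule at a point where the denominator is nonzero.
-/

/-- The para-Kähler potential `V = -log(ax+by-1)` of the dancing metric. -/
noncomputable def danceV (x y a b : ℝ) : ℝ := - Real.log (a*x + b*y - 1)

/- Unconditional: where `p * t + q = 0` both sides are `0`, by the conventions
`deriv Real.log 0 = 0` and `p / 0 = 0`. -/
theorem Real.deriv_log_affine (p q t : ℝ) :
    deriv (fun t => Real.log (p * t + q)) t = p / (p * t + q) := by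
  have := deriv_comp_mul_left p (fun u => Real.log (u + q)) t
  simp only [smul_eq_mul, deriv_comp_add_const, Real.deriv_log] at this
  rw [this, div_eq_mul_inv]

theorem deriv_affine_div_affine (c d p q t : ℝ) (h : p * t + q ≠ 0) :
    deriv (fun t => (c * t + d) / (p * t + q)) t = (c * q - d * p) / (p * t + q) ^ 2 := by
  have hnum : HasDerivAt (fun t => c * t + d) c t := by
    simpa using ((hasDerivAt_id t).const_mul c).add_const d
  have hden : HasDerivAt (fun t => p * t + q) p t := by
    simpa using ((hasDerivAt_id t).const_mul p).add_const q
  rw [(hnum.fun_div hden h).deriv]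
  ring

namespace danceV

variable {x y a b : ℝ}

theorem deriv_x :
    deriv (fun x' => danceV x' y a b) x = -a / (a * x + b * y - 1) := by
  simp only [danceV, add_sub_assoc, deriv.fun_neg, Real.deriv_log_affine, neg_div]

theorem deriv_y :
    deriv (fun y' => danceV x y' a b) y = -b / (a * x + b * y - 1) := by
  have hV : (fun y' => danceV x y' a b) = fun y' => -Real.log (b * y' + (a * x - 1)) := by
    funext y'
    rw [danceV]
    ring_nf
  rw [hV, deriv.fun_neg, Real.deriv_log_affine]
  ring

theorem deriv_a_deriv_x (h : a * x + b * y ≠ 1) :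
    deriv (fun a' => deriv (fun x' => danceV x' y a' b) x) a = (1 - b*y)/(1 - a*x - b*y)^2 := by
  have hf : (fun a' => deriv (fun x' => danceV x' y a' b) x)
      = fun a' => (-1 * a' + 0) / (x * a' + (b * y - 1)) := by
    funext a'
    rw [deriv_x]
    ring
  rw [hf, deriv_affine_div_affine _ _ _ _ _ fun hz => h (by linarith)]
  ring

theorem deriv_a_deriv_y (h : a * x + b * y ≠ 1) :
    deriv (fun a' => deriv (fun y' => danceV x y' a' b) y) a = (b*x)/(1 - a*x - b*y)^2 := by
  have hf : (fun a' => deriv (fun y' => danceV x y' a' b) y)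
      = fun a' => (0 * a' + -b) / (x * a' + (b * y - 1)) := by
    funext a'
    rw [deriv_y]
    ring
  rw [hf, deriv_affine_div_affine _ _ _ _ _ fun hz => h (by linarith)]
  ring

theorem deriv_b_deriv_x (h : a * x + b * y ≠ 1) :
    deriv (fun b' => deriv (fun x' => danceV x' y a b') x) b = (a*y)/(1 - a*x - b*y)^2 := by
  have hf : (fun b' => deriv (fun x' => danceV x' y a b') x)
      = fun b' => (0 * b' + -a) / (y * b' + (a * x - 1)) := by
    funext b'
    rw [deriv_x]
    ring
  rw [hf, deriv_affine_div_affine _ _ _ _ _ fun hz => h (by linarith)]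
  ring

theorem deriv_b_deriv_y (h : a * x + b * y ≠ 1) :
    deriv (fun b' => deriv (fun y' => danceV x y' a b') y) b = (1 - a*x)/(1 - a*x - b*y)^2 := by
  have hf : (fun b' => deriv (fun y' => danceV x y' a b') y)
      = fun b' => (-1 * b' + 0) / (y * b' + (a * x - 1)) := by
    funext b'
    rw [deriv_y]
    ring
  rw [hf, deriv_affine_div_affine _ _ _ _ _ fun hz => h (by linarith)]
  ring

end danceV

theorem dancing_paraKahler_potential (x y a b : ℝ) (h : 1 < a*x + b*y) :
    (deriv (fun a' => deriv (fun x' => danceV x' y a' b) x) a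
        = (1 - b*y)/(1 - a*x - b*y)^2)
    ∧ (deriv (fun a' => deriv (fun y' => danceV x y' a' b) y) a
        = (b*x)/(1 - a*x - b*y)^2)
    ∧ (deriv (fun b' => deriv (fun x' => danceV x' y a b') x) b
        = (a*y)/(1 - a*x - b*y)^2)
    ∧ (deriv (fun b' => deriv (fun y' => danceV x y' a b') y) b
        = (1 - a*x)/(1 - a*x - b*y)^2)
    ∧ (∀ dx dy da db : ℝ,
        2*da*((deriv (fun a' => deriv (fun x' => danceV x' y a' b) x) a)*dx
              + (deriv (fun a' => deriv (fun y' => danceV x y' a' b) y) a)*dy)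
        + 2*db*((deriv (fun b' => deriv (fun x' => danceV x' y a b') x) b)*dx
              + (deriv (fun b' => deriv (fun y' => danceV x y' a b') y) b)*dy)
        = (2*da*((1 - b*y)*dx + b*x*dy) + 2*db*(a*y*dx + (1 - a*x)*dy))
            /(1 - a*x - b*y)^2) := by
  have hax := danceV.deriv_a_deriv_x h.ne'
  have hay := danceV.deriv_a_deriv_y h.ne'
  have hbx := danceV.deriv_b_deriv_x h.ne'
  have hby := danceV.deriv_b_deriv_y h.ne'
  refine ⟨hax, hay, hbx, hby, fun dx dy da db => ?_⟩
  rw [hax, hay, hbx, hby]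
  ring
end

section
/- The pullback of G = 2[⟨p,dq⟩⟨dp,q⟩ − ⟨p,q⟩⟨dp,dq⟩]/⟨p,q⟩² under the embedding ι(x,y,a,b) = ((a,b,−1),(x,y,1)) of ℝ⁴ into (ℝ³)*×ℝ³ equals the dancing metric g = [2da((1−by)dx + bx dy) + 2db(ay dx + (1−ax)dy)]/(1−ax−by)². -/
def pair3 (p q : Fin 3 → ℝ) : ℝ := ∑ i, p i * q i

noncomputable def Gform (p q dp dq : Fin 3 → ℝ) : ℝ :=
  2 * (pair3 p dq * pair3 dp q - pair3 p q * pair3 dp dq) / (pair3 p q)^2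

theorem pair3_vec3 (p₀ p₁ p₂ q₀ q₁ q₂ : ℝ) :
    pair3 ![p₀, p₁, p₂] ![q₀, q₁, q₂] = p₀ * q₀ + p₁ * q₁ + p₂ * q₂ := by
  simp [pair3, Fin.sum_univ_three]

theorem Gform_pullback_is_dancing_general (x y a b dx dy da db : ℝ) :
    Gform ![a, b, -1] ![x, y, 1] ![da, db, 0] ![dx, dy, 0]
      = (2*da*((1 - b*y)*dx + b*x*dy) + 2*db*(a*y*dx + (1 - a*x)*dy))
          /(1 - a*x - b*y)^2 := by
  rw [Gform, pair3_vec3, pair3_vec3, pair3_vec3, pair3_vec3]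
  -- ⟨p,q⟩ = a*x + b*y - 1, so numerators and denominators agree as polynomials.
  congr 1 <;> ring

theorem Gform_pullback_is_dancing (x y a b dx dy da db : ℝ)
    (h : a*x + b*y ≠ 1) :
    Gform ![a, b, -1] ![x, y, 1] ![da, db, 0] ![dx, dy, 0]
      = (2*da*((1 - b*y)*dx + b*x*dy) + 2*db*(a*y*dx + (1 - a*x)*dy))
          /(1 - a*x - b*y)^2 :=
  Gform_pullback_is_dancing_general x y a b dx dy da db
end
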